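/- arXiv:2012.13883 — 6 statements merged into one kernel-verified Lean document; each statement's English description precedes it below -/
import Mathlib

section
/- Let G be a finite abelian group with an involution ∗ such that every finite-dimensional complex representation of G is isomorphic to a ∗-representation. Then the involution is the inverse map: a* = a⁻¹ for all a ∈ G. -/
open Matrix

/-- If `G` is a finite abelian group with an involution `∗` such that every finite
dimensional complex representation of `G` is isomorphic to a `∗`-representation,
then `∗` is the inverse map. -/
theorem involution_eq_inv_of_abelian
    (G : Type*) [CommGroup G] [Fintype G] (st : G → G)
    (hst1 : ∀ a, st (st a) = a)
    (hst2 : ∀ a b, st (a * b) = st b * st a)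
    (hrep : ∀ (n : ℕ) (π : G →* Matrix (Fin n) (Fin n) ℂ),
      ∃ B : Matrix (Fin n) (Fin n) ℂ, IsUnit B ∧
        ∀ s : G, B⁻¹ * π (st s) * B = (B⁻¹ * π s * B)ᴴ) :
    ∀ a : G, st a = a⁻¹ := by
  -- Key claim: for every character φ : G →* ℂˣ, φ (st s) = conj (φ s).
  have key : ∀ (φ : G →* ℂˣ) (s : G),
      (φ (st s) : ℂ) = (starRingEnd ℂ) (φ s : ℂ) := by
    intro φ s
    set π : G →* Matrix (Fin 1) (Fin 1) ℂ :=
      (Matrix.scalar (Fin 1)).toMonoidHom.comp ((Units.coeHom ℂ).comp φ) with hπ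
    obtain ⟨B, hB, heq⟩ := hrep 1 π
    have hentry : ∀ g : G, π g 0 0 = (φ g : ℂ) := by
      intro g
      simp [hπ, Matrix.scalar, Matrix.one_apply]
    have hinv : B⁻¹ 0 0 * B 0 0 = 1 := by
      have h1 : B⁻¹ * B = 1 :=
        Matrix.nonsing_inv_mul B ((Matrix.isUnit_iff_isUnit_det B).mp hB)
      have := congrFun (congrFun h1 0) 0
      simpa [Matrix.mul_apply, Matrix.one_apply] using this
    have h := congrFun (congrFun (heq s) 0) 0
    rw [Matrix.mul_apply, Fin.sum_univ_one, Matrix.mul_apply, Fin.sum_univ_one,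
      Matrix.conjTranspose_apply, Matrix.mul_apply, Fin.sum_univ_one,
      Matrix.mul_apply, Fin.sum_univ_one] at h
    -- h : B⁻¹ 0 0 * π (st s) 0 0 * B 0 0 = star (B⁻¹ 0 0 * π s 0 0 * B 0 0)
    have hstar : (starRingEnd ℂ) (B⁻¹ 0 0) * (starRingEnd ℂ) (B 0 0) = 1 := by
      rw [← _root_.map_mul, hinv, _root_.map_one]
    calc (φ (st s) : ℂ) = π (st s) 0 0 := (hentry _).symm
      _ = B⁻¹ 0 0 * π (st s) 0 0 * B 0 0 := by
          rw [mul_comm (B⁻¹ 0 0), mul_assoc, hinv, mul_one]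
      _ = star (B⁻¹ 0 0 * π s 0 0 * B 0 0) := h
      _ = (starRingEnd ℂ) (B⁻¹ 0 0) * (starRingEnd ℂ) (π s 0 0) * (starRingEnd ℂ) (B 0 0) := by
          simp only [star_mul', RCLike.star_def]
      _ = (starRingEnd ℂ) (π s 0 0) := by
          rw [mul_comm _ ((starRingEnd ℂ) (π s 0 0)), mul_assoc, hstar, mul_one]
      _ = (starRingEnd ℂ) (φ s : ℂ) := by rw [hentry]
  -- characters have values of norm 1, so conj (φ s) = (φ s)⁻¹ and φ (st a * a) = 1
  have hker : ∀ a : G, ∀ φ : G →* ℂˣ, φ (st a * a) = 1 := by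
    intro a φ
    have hpow : (φ a : ℂ) ^ Fintype.card G = 1 := by
      rw [← Units.val_pow_eq_pow_val, ← _root_.map_pow, pow_card_eq_one, _root_.map_one, Units.val_one]
    have habs : ‖(φ a : ℂ)‖ = 1 :=
      (isOfFinOrder_iff_pow_eq_one.2 ⟨Fintype.card G, Fintype.card_pos, hpow⟩).norm_eq_one
    have hmul : (φ (st a * a) : ℂ) = 1 := by
      rw [_root_.map_mul, Units.val_mul, key, Complex.conj_mul']
      simp [habs]
    exact Units.ext (by simpa using hmul)
  intro a
  have : st a * a = 1 := by
    by_contra hne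
    have : NeZero (Monoid.exponent G) := ⟨Monoid.exponent_ne_zero_of_finite⟩
    obtain ⟨φ, hφ⟩ :=
      CommGroup.exists_apply_ne_one_of_hasEnoughRootsOfUnity G ℂ hne
    exact hφ (hker a φ)
  exact eq_inv_of_mul_eq_one_left this
end

section
/- Let G be a finite group of odd order with an involution ∗ such that every complex irreducible representation π of G satisfies χ_π(s*) = conj(χ_π(s)) for all s (equivalently, the automorphism φ(s) = (s⁻¹)* fixes every conjugacy class). Then ∗ is the inverse map. -/
/-- Let `G` be a finite group of odd order with an involution `∗` such that the
automorphism `φ(s) = (s⁻¹)∗` fixes every conjugacy class (equivalently, every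
irreducible character `χ` satisfies `χ(s∗) = conj (χ s)`). Then `∗` is the
inverse map. -/
theorem involution_eq_inv_of_odd_order
    (G : Type*) [Group G] [Fintype G]
    (hodd : Odd (Fintype.card G))
    (st : G → G)
    (hst1 : ∀ a, st (st a) = a)
    (hst2 : ∀ a b, st (a * b) = st b * st a)
    (hconj : ∀ s : G, IsConj s (st s⁻¹)) :
    ∀ s : G, st s = s⁻¹ := by
  -- Key step: in a group of odd order, an element conjugate to its own
  -- inverse is trivial.
  have key : ∀ y : G, IsConj y y⁻¹ → y = 1 := by
    intro y hy
    obtain ⟨c, hc⟩ := isConj_iff.mp hy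
    -- hc : c * y * c⁻¹ = y⁻¹
    have h2 : Commute (c ^ 2) y := by
      have hcys : c ^ 2 * y * (c ^ 2)⁻¹ = y := by
        calc c ^ 2 * y * (c ^ 2)⁻¹ = c * (c * y * c⁻¹) * c⁻¹ := by
              rw [pow_two, mul_inv_rev]; group
          _ = c * y⁻¹ * c⁻¹ := by rw [hc]
          _ = (c * y * c⁻¹)⁻¹ := by group
          _ = y := by rw [hc]; group
      have := mul_inv_eq_iff_eq_mul.mp hcys
      exact this
    -- the order of c is odd
    have hn : Odd (orderOf c) := hodd.of_dvd_nat (orderOf_dvd_card)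
    obtain ⟨k, hk⟩ := hn
    have hcy : Commute c y := by
      have h3 := h2.pow_left (k + 1)
      have h4 : (c ^ 2) ^ (k + 1) = c := by
        rw [← pow_mul]
        have : 2 * (k + 1) = orderOf c + 1 := by omega
        rw [this, pow_succ, pow_orderOf_eq_one, one_mul]
      rwa [h4] at h3
    have hyy : y = y⁻¹ := by
      rw [← hc, hcy.eq, mul_assoc, mul_inv_cancel, mul_one]
    have hsq : y ^ 2 = 1 := by
      rw [pow_two]
      nth_rewrite 2 [hyy]
      exact mul_inv_cancel y
    have hdvd : orderOf y ∣ 2 := orderOf_dvd_of_pow_eq_one hsq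
    have hyodd : Odd (orderOf y) := hodd.of_dvd_nat (orderOf_dvd_card)
    rcases (Nat.dvd_prime Nat.prime_two).mp hdvd with h | h
    · exact orderOf_eq_one_iff.mp h
    · exact absurd (h ▸ hyodd) (by decide)
  -- Now show st g⁻¹ = g for all g.
  have hfix : ∀ g : G, st g⁻¹ = g := by
    intro g
    set y : G := g * (st g⁻¹)⁻¹ with hy
    have hsty : st y⁻¹ = y⁻¹ := by
      have : y⁻¹ = st g⁻¹ * g⁻¹ := by rw [hy]; group
      rw [this, hst2, hst1]
    have hc := hconj y
    rw [hsty] at hc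
    have hy1 : y = 1 := key y hc
    have : g * (st g⁻¹)⁻¹ = 1 := hy1
    have := mul_eq_one_iff_eq_inv.mp this
    rw [inv_inv] at this
    exact this.symm
  intro s
  have := hfix s⁻¹
  rwa [inv_inv] at this
end

section
/- Let G be a finite group with an involution ∗, and let π be an irreducible unitary matrix representation such that π∘∗ is equivalent to π∘ι, where ι is inversion, via some invertible intertwiner. Then there exists a unitary matrix A with A² = Id such that π(s*) = A π(s⁻¹) A⁻¹ for all s ∈ G. -/
open Matrix

/-- Let `π` be an irreducible unitary matrix representation of a finite group `G`
with involution `∗` such that `π∘∗` is equivalent to `π∘ι` (`ι` = inversion) via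
some invertible intertwiner. Then there is a unitary `A` with `A² = 1` such that
`π(s∗) = A π(s⁻¹) A⁻¹` for all `s`. -/
theorem exists_unitary_involution_intertwiner
    (G : Type*) [Group G] [Fintype G] (st : G → G)
    (hst1 : ∀ a, st (st a) = a)
    (hst2 : ∀ a b, st (a * b) = st b * st a)
    (n : ℕ) (π : G →* Matrix (Fin n) (Fin n) ℂ)
    (huni : ∀ s, π s ∈ Matrix.unitaryGroup (Fin n) ℂ)
    (hirr : ∀ W : Submodule ℂ (Fin n → ℂ),
      (∀ s, ∀ v ∈ W, (π s).mulVec v ∈ W) → W = ⊥ ∨ W = ⊤)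
    (T : Matrix (Fin n) (Fin n) ℂ) (hT : IsUnit T)
    (hint : ∀ s : G, π (st s) * T = T * π s⁻¹) :
    ∃ A : Matrix (Fin n) (Fin n) ℂ,
      A ∈ Matrix.unitaryGroup (Fin n) ℂ ∧ A * A = 1 ∧
      ∀ s : G, π (st s) = A * π s⁻¹ * A⁻¹ := by
  rcases Nat.eq_zero_or_pos n with hn | hn
  · subst hn
    refine ⟨1, ?_, Subsingleton.elim _ _, fun s => Subsingleton.elim _ _⟩
    rw [Matrix.mem_unitaryGroup_iff]
    exact Subsingleton.elim _ _
  haveI : Nonempty (Fin n) := ⟨⟨0, hn⟩⟩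
  -- basic facts about π
  have hpinv : ∀ s : G, π s⁻¹ * π s = 1 := fun s => by
    rw [← _root_.map_mul, inv_mul_cancel, _root_.map_one]
  have hpinv' : ∀ s : G, π s * π s⁻¹ = 1 := fun s => by
    rw [← _root_.map_mul, mul_inv_cancel, _root_.map_one]
  have hstar : ∀ s : G, (π s)ᴴ = π s⁻¹ := by
    intro s
    have h1 : (π s)ᴴ * π s = 1 := (Matrix.mem_unitaryGroup_iff'.mp (huni s))
    calc (π s)ᴴ = (π s)ᴴ * (π s * π s⁻¹) := by rw [hpinv', mul_one]
      _ = ((π s)ᴴ * π s) * π s⁻¹ := by rw [mul_assoc]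
      _ = π s⁻¹ := by rw [h1, one_mul]
  -- invertibility of T
  have hTdet : IsUnit T.det := (Matrix.isUnit_iff_isUnit_det T).mp hT
  have hT1 : T * T⁻¹ = 1 := Matrix.mul_nonsing_inv T hTdet
  have hT2 : T⁻¹ * T = 1 := Matrix.nonsing_inv_mul T hTdet
  -- Schur's lemma
  have schur : ∀ B : Matrix (Fin n) (Fin n) ℂ, (∀ s, π s * B = B * π s) →
      ∃ c : ℂ, B = c • 1 := by
    intro B hB
    obtain ⟨μ, hμ⟩ := Module.End.exists_eigenvalue (Matrix.mulVecLin B)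
    set W := Module.End.eigenspace (Matrix.mulVecLin B) μ with hW
    have hWinv : ∀ s, ∀ v ∈ W, (π s).mulVec v ∈ W := by
      intro s v hv
      rw [hW, Module.End.mem_eigenspace_iff] at hv ⊢
      simp only [Matrix.mulVecLin_apply] at hv ⊢
      rw [Matrix.mulVec_mulVec, ← hB, ← Matrix.mulVec_mulVec, hv,
        Matrix.mulVec_smul]
    rcases hirr W hWinv with h | h
    · exact absurd h hμ
    · refine ⟨μ, ?_⟩
      have hall : ∀ v : Fin n → ℂ, B.mulVec v = μ • v := by
        intro v
        have hv : v ∈ W := h ▸ Submodule.mem_top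
        rw [hW, Module.End.mem_eigenspace_iff] at hv
        simpa using hv
      ext i j
      have := congrFun (hall (Pi.single j 1)) i
      simp only [Matrix.mulVec_single, mul_one, Pi.smul_apply, MulOpposite.op_one, one_smul, Matrix.col_apply] at this
      simp [this, Matrix.one_apply, Pi.single_apply, mul_comm]
  -- second intertwining relation
  have hint2 : ∀ s : G, π s * T = T * π (st s)⁻¹ := by
    intro s
    have := hint (st s)
    rwa [hst1] at this
  -- conjugate transpose relation : Tᴴ * π (st s)⁻¹ = π s * Tᴴ
  have hint3 : ∀ s : G, Tᴴ * π (st s)⁻¹ = π s * Tᴴ := by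
    intro s
    have := congrArg conjTranspose (hint s)
    rw [Matrix.conjTranspose_mul, Matrix.conjTranspose_mul] at this
    have e1 : (π (st s))ᴴ = π (st s)⁻¹ := hstar (st s)
    have e2 : (π s⁻¹)ᴴ = π s := by rw [hstar s⁻¹, inv_inv]
    rw [e1, e2] at this
    exact this
  -- B₁ := T⁻¹ * Tᴴ commutes with all π g
  have hcomm1 : ∀ g : G, π g * (T⁻¹ * Tᴴ) = (T⁻¹ * Tᴴ) * π g := by
    intro g
    have hs : (st (st g⁻¹))⁻¹ = g := by rw [hst1, inv_inv]
    have h3 := hint3 (st g⁻¹)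
    have h2 := hint2 (st g⁻¹)
    rw [hs] at h3 h2
    -- h3 : Tᴴ * π g = π (st g⁻¹) * Tᴴ
    -- h2 : π (st g⁻¹) * T = T * π g
    have e : π (st g⁻¹) = T * π g * T⁻¹ := by
      rw [← h2, mul_assoc, hT1, mul_one]
    rw [e] at h3
    -- h3 : Tᴴ * π g = T * π g * T⁻¹ * Tᴴ
    calc π g * (T⁻¹ * Tᴴ) = T⁻¹ * T * (π g * (T⁻¹ * Tᴴ)) := by rw [hT2, one_mul]
      _ = T⁻¹ * (T * π g * T⁻¹ * Tᴴ) := by noncomm_ring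
      _ = T⁻¹ * (Tᴴ * π g) := by rw [h3]
      _ = (T⁻¹ * Tᴴ) * π g := by noncomm_ring
  -- B₂ := T * T commutes with all π s
  have hcomm2 : ∀ s : G, π s * (T * T) = (T * T) * π s := by
    intro s
    -- π ((st s)⁻¹) = T⁻¹ * π s * T  and π (st s) = T * π s⁻¹ * T⁻¹
    have e1 : π (st s)⁻¹ = T⁻¹ * (π s * T) := by
      rw [hint2 s, ← mul_assoc, hT2, one_mul]
    have e2 : π (st s) = T * π s⁻¹ * T⁻¹ := by
      rw [← hint s, mul_assoc, hT1, mul_one]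
    have key : π (st s)⁻¹ * π (st s) = 1 := hpinv (st s)
    rw [e1, e2] at key
    -- key : T⁻¹ * (π s * T) * (T * π s⁻¹ * T⁻¹) = 1
    have key2 : π s * (T * T) * π s⁻¹ = T * T := by
      calc π s * (T * T) * π s⁻¹
          = (T * T⁻¹) * (π s * (T * T) * π s⁻¹) * (T⁻¹ * T) := by
            rw [hT1, hT2, one_mul, mul_one]
        _ = T * (T⁻¹ * (π s * T) * (T * π s⁻¹ * T⁻¹)) * T := by noncomm_ring
        _ = T * T := by rw [key, mul_one]
    calc π s * (T * T) = π s * (T * T) * (π s⁻¹ * π s) := by rw [hpinv, mul_one]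
      _ = (π s * (T * T) * π s⁻¹) * π s := by noncomm_ring
      _ = (T * T) * π s := by rw [key2]
  obtain ⟨c₁, hc₁⟩ := schur (T⁻¹ * Tᴴ) hcomm1
  obtain ⟨c₂, hc₂⟩ := schur (T * T) hcomm2
  -- Tᴴ = c₁ • T, Tᴴ * T = (c₁ * c₂) • 1
  have hTH : Tᴴ = c₁ • T := by
    calc Tᴴ = T * (T⁻¹ * Tᴴ) := by rw [← mul_assoc, hT1, one_mul]
      _ = T * (c₁ • 1) := by rw [hc₁]
      _ = c₁ • T := by rw [Matrix.mul_smul, mul_one]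
  have hTT : Tᴴ * T = (c₁ * c₂) • (1 : Matrix (Fin n) (Fin n) ℂ) := by
    rw [hTH, Matrix.smul_mul, hc₂, smul_smul]
  set d : ℂ := c₁ * c₂ with hd
  -- d is a positive real
  set i₀ : Fin n := ⟨0, hn⟩
  set r : ℝ := ∑ j, Complex.normSq (T j i₀) with hr
  have hdr : d = (r : ℂ) := by
    have := congrFun (congrFun hTT i₀) i₀
    simp only [Matrix.mul_apply, Matrix.smul_apply, Matrix.one_apply_eq, smul_eq_mul,
      mul_one, Matrix.conjTranspose_apply] at this
    rw [← this, hr]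
    push_cast
    refine Finset.sum_congr rfl fun j _ => ?_
    rw [Complex.normSq_eq_conj_mul_self]
    rfl
  have hdne : d ≠ 0 := by
    intro h0
    have hU : IsUnit (Tᴴ * T) := by
      rw [Matrix.isUnit_iff_isUnit_det, Matrix.det_mul, Matrix.det_conjTranspose]
      exact (hTdet.star.mul hTdet)
    rw [hTT, h0, zero_smul] at hU
    rcases hU with ⟨u, hu⟩
    have h1 : (1 : Matrix (Fin n) (Fin n) ℂ) = 0 := by
      calc (1 : Matrix (Fin n) (Fin n) ℂ) = u.val * ↑u⁻¹ := u.mul_inv.symm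
        _ = 0 * ↑u⁻¹ := by rw [hu]
        _ = 0 := zero_mul _
    have := congrFun (congrFun h1 i₀) i₀
    simp [Matrix.one_apply] at this
  have hrnn : 0 ≤ r := Finset.sum_nonneg fun j _ => Complex.normSq_nonneg _
  have hrpos : 0 < r :=
    lt_of_le_of_ne hrnn fun h => hdne (by rw [hdr, ← h, Complex.ofReal_zero])
  set t : ℝ := Real.sqrt r with ht
  have htpos : 0 < t := Real.sqrt_pos.mpr hrpos
  have ht2 : (t : ℂ) * t = (r : ℂ) := by
    rw [← Complex.ofReal_mul, Real.mul_self_sqrt hrpos.le]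
  set A₀ : Matrix (Fin n) (Fin n) ℂ := ((t : ℂ))⁻¹ • T with hA₀
  have htne : (t : ℂ) ≠ 0 := by
    simp only [ne_eq, Complex.ofReal_eq_zero]
    exact htpos.ne'
  have hsc : star ((t : ℂ))⁻¹ * ((t : ℂ))⁻¹ * (r : ℂ) = 1 := by
    rw [Complex.star_def, map_inv₀, Complex.conj_ofReal, ← ht2]
    field_simp
  have hA₀u : A₀ᴴ * A₀ = 1 := by
    rw [hA₀, Matrix.conjTranspose_smul, Matrix.smul_mul, Matrix.mul_smul, hTT, hdr,
      smul_smul, smul_smul, hsc, one_smul]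
  -- A₀ * A₀ is a scalar λ with conj λ * λ = 1
  set lam : ℂ := ((t:ℂ))⁻¹ * ((t:ℂ))⁻¹ * c₂ with hlam
  have hA₀sq : A₀ * A₀ = lam • 1 := by
    rw [hA₀, Matrix.smul_mul, Matrix.mul_smul, hc₂, smul_smul, smul_smul, hlam]
  have hlamu : star lam * lam = 1 := by
    have h1 : (A₀ * A₀)ᴴ * (A₀ * A₀) = 1 := by
      rw [Matrix.conjTranspose_mul]
      calc A₀ᴴ * A₀ᴴ * (A₀ * A₀) = A₀ᴴ * (A₀ᴴ * A₀) * A₀ := by noncomm_ring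
        _ = 1 := by rw [hA₀u, mul_one, hA₀u]
    rw [hA₀sq, Matrix.conjTranspose_smul, Matrix.conjTranspose_one, Matrix.smul_mul,
      Matrix.mul_smul, smul_smul, mul_one] at h1
    have := congrFun (congrFun h1 i₀) i₀
    simpa [Matrix.one_apply] using this
  obtain ⟨μ, hμ⟩ := IsAlgClosed.exists_pow_nat_eq (k := ℂ) (star lam) two_pos
  set A : Matrix (Fin n) (Fin n) ℂ := μ • A₀ with hA
  have hμu : star μ * μ = 1 := by
    have h1 : (star μ * μ) * (star μ * μ) = 1 := by
      have h0 : star (μ ^ 2) * μ ^ 2 = 1 := by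
        rw [hμ, star_star, mul_comm]; exact hlamu
      calc (star μ * μ) * (star μ * μ) = star (μ ^ 2) * μ ^ 2 := by rw [star_pow]; ring
        _ = 1 := h0
    have hq : ((Complex.normSq μ : ℝ) : ℂ) * ((Complex.normSq μ : ℝ) : ℂ) = 1 := by
      rw [Complex.normSq_eq_conj_mul_self, ← Complex.star_def]
      exact h1
    have hq' : (Complex.normSq μ : ℝ) * (Complex.normSq μ : ℝ) = 1 := by exact_mod_cast hq
    have hq1 : (Complex.normSq μ : ℝ) = 1 := by nlinarith [Complex.normSq_nonneg μ]
    rw [Complex.star_def, ← Complex.normSq_eq_conj_mul_self, hq1, Complex.ofReal_one]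
  have hAu : Aᴴ * A = 1 := by
    rw [hA, Matrix.conjTranspose_smul, Matrix.smul_mul, Matrix.mul_smul, hA₀u, smul_smul, hμu,
      one_smul]
  have hAsq : A * A = 1 := by
    rw [hA, Matrix.smul_mul, Matrix.mul_smul, hA₀sq, smul_smul, smul_smul]
    have hsq : μ * μ = star lam := by rw [← hμ]; ring
    have h2 : μ * (μ * lam) = 1 := by rw [← mul_assoc, hsq, hlamu]
    have h2' : μ * μ * lam = 1 := by rw [mul_assoc]; exact h2
    first
      | rw [h2, one_smul]
      | rw [h2', one_smul]
  have hAinv : A⁻¹ = A := Matrix.inv_eq_right_inv hAsq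
  refine ⟨A, Matrix.mem_unitaryGroup_iff'.mpr hAu, hAsq, ?_⟩
  intro s
  have hintA : π (st s) * A = A * π s⁻¹ := by
    rw [hA, hA₀, Matrix.mul_smul, Matrix.mul_smul, Matrix.smul_mul, Matrix.smul_mul, hint s]
  rw [hAinv]
  calc π (st s) = π (st s) * (A * A) := by rw [hAsq, mul_one]
    _ = (π (st s) * A) * A := by rw [mul_assoc]
    _ = A * π s⁻¹ * A := by rw [hintA]
end

section
/- Let S = M⁰(I, J, G, P) be a regular Rees matrix semigroup over a finite group G with zero. If S admits an involution ∗, then |I| = |J|. -/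
/-- Multiplication in the Rees matrix semigroup `M⁰(I, J, G, P)` over a group with
zero: elements are `some (i, a, j)` (the matrix with single entry `a` at `(i,j)`)
together with `none` (the zero), and `(a)_{ij} ∘ (b)_{kl} = (a p_{jk} b)_{il}`. -/
def reesMul {I J G : Type*} [Mul G] (P : J → I → Option G) :
    Option (I × G × J) → Option (I × G × J) → Option (I × G × J)
  | some (i, a, j), some (k, b, l) => (P j k).map fun p => (i, a * p * b, l)
  | _, _ => none

theorem reesMul_none_right {I J G : Type*} [Mul G] (P : J → I → Option G)
    (s : Option (I × G × J)) : reesMul P s none = none := by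
  cases s with
  | none => rfl
  | some x => obtain ⟨i, a, j⟩ := x; rfl

theorem reesMul_none_left {I J G : Type*} [Mul G] (P : J → I → Option G)
    (s : Option (I × G × J)) : reesMul P none s = none := rfl

theorem reesMul_some {I J G : Type*} [Mul G] (P : J → I → Option G)
    (x y : I × G × J) : reesMul P (some x) (some y)
      = (P x.2.2 y.1).map fun p => (x.1, x.2.1 * p * y.2.1, y.2.2) := by
  obtain ⟨i, a, j⟩ := x; obtain ⟨k, b, l⟩ := y; rfl

/-- If a regular Rees matrix semigroup `M⁰(I, J, G, P)` admits an involution, then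
`|I| = |J|`. -/
theorem card_eq_of_involution_reesMatrix
    (I J G : Type*) [Fintype I] [Fintype J] [Group G]
    (P : J → I → Option G)
    (hrow : ∀ j, ∃ i, P j i ≠ none)
    (hcol : ∀ i, ∃ j, P j i ≠ none)
    (st : Option (I × G × J) → Option (I × G × J))
    (hbij : Function.Bijective st)
    (hst1 : ∀ s, st (st s) = s)
    (hst2 : ∀ s t, st (reesMul P s t) = reesMul P (st t) (st s)) :
    Fintype.card I = Fintype.card J := by
  classical
  by_cases hz : st none = none
  · -- main case: the involution fixes the zero
    have hns : ∀ x : I × G × J, ∃ y, st (some x) = some y := by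
      intro x
      cases h : st (some x) with
      | none => exact absurd (hbij.1 (h.trans hz.symm)) (by simp)
      | some y => exact ⟨y, rfl⟩
    choose f hf using hns
    have hff : ∀ x, f (f x) = x := by
      intro x
      have : some (f (f x)) = some x := by
        rw [← hf, ← hf, hst1]
      exact Option.some_injective _ this
    -- elements in the same R-class (same row index) map to the same column index
    have Lrow : ∀ x y : I × G × J, x.1 = y.1 → (f x).2.2 = (f y).2.2 := by
      rintro ⟨i, a, j⟩ ⟨i', a', j'⟩ h
      simp only at h
      subst h
      obtain ⟨k, hk⟩ := hrow j
      obtain ⟨p, hp⟩ := Option.ne_none_iff_exists'.mp hk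
      have hmul : reesMul P (some (i, a, j)) (some (k, p⁻¹ * a⁻¹ * a', j'))
          = some (i, a', j') := by
        simp only [reesMul, hp, Option.map_some]
        congr 2
        group
      have key := hst2 (some (i, a, j)) (some (k, p⁻¹ * a⁻¹ * a', j'))
      rw [hmul] at key
      simp only [hf, reesMul_some] at key
      cases hq : P (f (k, p⁻¹ * a⁻¹ * a', j')).2.2 (f (i, a, j)).1 with
      | none => rw [hq] at key; exact absurd key (by simp)
      | some q =>
        rw [hq, Option.map_some] at key
        have := Option.some_injective _ key
        exact (congrArg (fun z => z.2.2) this).symm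
    -- elements in the same L-class (same column index) map to the same row index
    have Lcol : ∀ x y : I × G × J, x.2.2 = y.2.2 → (f x).1 = (f y).1 := by
      rintro ⟨i, a, j⟩ ⟨i', a', j'⟩ h
      simp only at h
      subst h
      obtain ⟨l, hl⟩ := hcol i
      obtain ⟨p, hp⟩ := Option.ne_none_iff_exists'.mp hl
      have hmul : reesMul P (some (i', a' * a⁻¹ * p⁻¹, l)) (some (i, a, j))
          = some (i', a', j) := by
        simp only [reesMul, hp, Option.map_some]
        congr 2
        group
      have key := hst2 (some (i', a' * a⁻¹ * p⁻¹, l)) (some (i, a, j))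
      rw [hmul] at key
      simp only [hf, reesMul_some] at key
      cases hq : P (f (i, a, j)).2.2 (f (i', a' * a⁻¹ * p⁻¹, l)).1 with
      | none => rw [hq] at key; exact absurd key (by simp)
      | some q =>
        rw [hq, Option.map_some] at key
        have := Option.some_injective _ key
        exact (congrArg (fun z => z.1) this).symm
    set φ : I → J := fun i => (f (i, 1, Classical.choose (hcol i))).2.2 with hφ
    set ψ : J → I := fun j => (f (Classical.choose (hrow j), 1, j)).1 with hψ
    have hψφ : ∀ i, ψ (φ i) = i := by
      intro i
      have h1 : ((Classical.choose (hrow (φ i)), (1 : G), φ i) : I × G × J).2.2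
          = (f (i, 1, Classical.choose (hcol i))).2.2 := rfl
      have := Lcol _ _ h1
      rw [hff] at this
      exact this
    have hφψ : ∀ j, φ (ψ j) = j := by
      intro j
      have h1 : ((ψ j, (1 : G), Classical.choose (hcol (ψ j))) : I × G × J).1
          = (f (Classical.choose (hrow j), 1, j)).1 := rfl
      have := Lrow _ _ h1
      rw [hff] at this
      exact this
    exact Fintype.card_congr ⟨φ, ψ, hψφ, hφψ⟩
  · -- degenerate case: st none ≠ none forces |I| = |J| = 1
    cases hz' : st none with
    | none => exact absurd hz' hz
    | some z =>
      obtain ⟨i, a, j⟩ := z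
      have habs : ∀ u, reesMul P u (some (i, a, j)) = some (i, a, j) ∧
          reesMul P (some (i, a, j)) u = some (i, a, j) := by
        intro u
        obtain ⟨s, hs⟩ := hbij.2 u
        constructor
        · have := hst2 none s
          rw [reesMul_none_left, hz', hs] at this
          exact this.symm
        · have := hst2 s none
          rw [reesMul_none_right, hz', hs] at this
          exact this.symm
      have hI : ∀ k : I, k = i := by
        intro k
        obtain ⟨l, hl⟩ := hcol i
        obtain ⟨p, hp⟩ := Option.ne_none_iff_exists'.mp hl
        have := (habs (some (k, 1, l))).1
        simp only [reesMul, hp, Option.map_some] at this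
        have := Option.some_injective _ this
        exact congrArg (fun z => z.1) this
      have hJ : ∀ l : J, l = j := by
        intro l
        obtain ⟨k, hk⟩ := hrow j
        obtain ⟨p, hp⟩ := Option.ne_none_iff_exists'.mp hk
        have := (habs (some (k, 1, l))).2
        simp only [reesMul, hp, Option.map_some] at this
        have := Option.some_injective _ this
        exact congrArg (fun z => z.2.2) this
      have h1 : Fintype.card I = 1 := Fintype.card_eq_one_iff.mpr ⟨i, hI⟩
      have h2 : Fintype.card J = 1 := Fintype.card_eq_one_iff.mpr ⟨j, hJ⟩
      omega
end

section
/- Let S = M⁰(I, J, G, P) be a regular Rees matrix semigroup and let π^l, π^r be the standard left and right representations attached to a matrix representation σ of G (π^l((a)_{ij}) = σ((a)_{ij}P), π^r((a)_{ij}) = σ(P(a)_{ij}), applying σ entrywise with σ(0) = 0). If both π^l and π^r are semiunitary (every π^l(s) and π^r(s) satisfies A A* A = A), and p_{11} = 1, p_{1j} ∈ {0,1} for all j, then σ is a unitary representation of G. -/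
open Matrix

/-- Extend a matrix representation `σ` of `G` to `G⁰ = G ∪ {0}` by `σ 0 = 0`. -/
def sigmaZ {G : Type*} (k : ℕ) (σ : G → Matrix (Fin k) (Fin k) ℂ) :
    Option G → Matrix (Fin k) (Fin k) ℂ
  | none => 0
  | some g => σ g

/-- The standard left representation of `M⁰(I, J, G, P)`:
`π^l((a)_{ij}) = σ((a)_{ij} P)` (a block matrix whose only nonzero block-row is
row `i`, with blocks `σ(a p_{jl})`). -/
def piL {I J G : Type*} [Mul G] [DecidableEq I] (k : ℕ)
    (σ : G → Matrix (Fin k) (Fin k) ℂ) (P : J → I → Option G) :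
    Option (I × G × J) → Matrix (I × Fin k) (I × Fin k) ℂ
  | none => 0
  | some (i, a, j) => Matrix.of fun p q =>
      if p.1 = i then sigmaZ k σ ((P j q.1).map fun x => a * x) p.2 q.2 else 0

/-- The standard right representation of `M⁰(I, J, G, P)`:
`π^r((a)_{ij}) = σ(P (a)_{ij})` (a block matrix whose only nonzero block-column is
column `j`, with blocks `σ(p_{ri} a)`). -/
def piR {I J G : Type*} [Mul G] [DecidableEq J] (k : ℕ)
    (σ : G → Matrix (Fin k) (Fin k) ℂ) (P : J → I → Option G) :
    Option (I × G × J) → Matrix (J × Fin k) (J × Fin k) ℂ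
  | none => 0
  | some (i, a, j) => Matrix.of fun p q =>
      if q.1 = j then sigmaZ k σ ((P p.1 i).map fun x => x * a) p.2 q.2 else 0

open Kronecker in
lemma kron_conjTranspose {l m n p : Type*} {α : Type*} [CommRing α] [StarRing α]
    (A : Matrix l m α) (B : Matrix n p α) :
    (A ⊗ₖ B)ᴴ = Aᴴ ⊗ₖ Bᴴ := by
  ext ⟨i,a⟩ ⟨j,b⟩
  simp [conjTranspose_apply, kroneckerMap_apply, mul_comm]

open Kronecker

/-- Let `S = M⁰(I, J, G, P)` be a regular Rees matrix semigroup with `p_{11} = 1`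
and `p_{1j} ∈ {0, 1}` for all `j`. If both standard representations `π^l`, `π^r`
attached to a matrix representation `σ` of `G` are semiunitary, then `σ` is a
unitary representation of `G`. -/
theorem standard_reps_semiunitary_imp_sigma_unitary
    (I J G : Type*) [Fintype I] [Fintype J] [DecidableEq I] [DecidableEq J] [Group G]
    (P : J → I → Option G)
    (hrow : ∀ j, ∃ i, P j i ≠ none)
    (hcol : ∀ i, ∃ j, P j i ≠ none)
    (k : ℕ) (σ : G → Matrix (Fin k) (Fin k) ℂ)
    (hσmul : ∀ g h : G, σ (g * h) = σ g * σ h)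
    (hσone : σ 1 = 1)
    (i₀ : I) (j₀ : J)
    (hP11 : P j₀ i₀ = some 1)
    (hP1 : ∀ i, P j₀ i = none ∨ P j₀ i = some 1)
    (hl : ∀ s, piL k σ P s * (piL k σ P s)ᴴ * piL k σ P s = piL k σ P s)
    (hr : ∀ s, piR k σ P s * (piR k σ P s)ᴴ * piR k σ P s = piR k σ P s) :
    ∀ g : G, σ g ∈ Matrix.unitaryGroup (Fin k) ℂ := by
  classical
  set B : Matrix I I ℂ :=
    Matrix.of fun i l => if i = i₀ ∧ P j₀ l = some 1 then (1:ℂ) else 0 with hB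
  set μ : ℂ := ∑ l : I, if P j₀ l = some 1 then (1:ℂ) else 0 with hμ
  have hA : ∀ h : G, piL k σ P (some (i₀, h, j₀)) = B ⊗ₖ σ h := by
    intro h
    ext ⟨i,a⟩ ⟨l,b⟩
    simp only [piL, Matrix.of_apply, kroneckerMap_apply, hB]
    rcases hP1 l with hp | hp <;> by_cases hi : i = i₀ <;>
      simp [hp, hi, sigmaZ, mul_one]
  have hBH : Bᴴ = Matrix.of fun l i => if i = i₀ ∧ P j₀ l = some 1 then (1:ℂ) else 0 := by
    ext l i
    simp [conjTranspose_apply, hB, apply_ite]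
  have hBBB : B * Bᴴ * B = μ • B := by
    ext i l
    by_cases hi : i = i₀
    · subst hi
      rcases hP1 l with hp | hp
      · simp [Matrix.mul_apply, hB, hBH, hp]
      · simp only [Matrix.mul_apply, hB, hBH, hp, hμ, Matrix.smul_apply, Matrix.of_apply,
          smul_eq_mul]
        rw [Finset.sum_eq_single i]
        · simp only [true_and, and_true, eq_self_iff_true, if_true, mul_one, one_mul]
          refine Finset.sum_congr rfl fun x _ => ?_
          split <;> simp_all
        · intro b _ hb
          simp [hb]
        · intro hni
          exact absurd (Finset.mem_univ i) hni
    · simp [Matrix.mul_apply, hB, hi]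
  have hkey : ∀ h : G, μ • (σ h * (σ h)ᴴ * σ h) = σ h := by
    intro h
    have h1 := hl (some (i₀, h, j₀))
    rw [hA h, kron_conjTranspose, ← Matrix.mul_kronecker_mul, ← Matrix.mul_kronecker_mul,
      hBBB, Matrix.smul_kronecker] at h1
    ext a b
    have h2 := Matrix.ext_iff.2 h1 (i₀, a) (i₀, b)
    simpa [kroneckerMap_apply, hB, hP11] using h2
  rcases Nat.eq_zero_or_pos k with hk | hk
  · subst hk
    intro g
    rw [Matrix.mem_unitaryGroup_iff]
    ext i j
    exact i.elim0
  · have hμ1 : μ = 1 := by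
      have := hkey 1
      rw [hσone] at this
      have h2 := Matrix.ext_iff.2 this ⟨0, hk⟩ ⟨0, hk⟩
      simpa using h2
    intro g
    have hinv : σ g * σ g⁻¹ = 1 := by
      rw [← hσmul, mul_inv_cancel, hσone]
    have hkey' : σ g * (σ g)ᴴ * σ g = σ g := by
      have := hkey g; rwa [hμ1, one_smul] at this
    rw [Matrix.mem_unitaryGroup_iff, Matrix.star_eq_conjTranspose]
    have h3 := congrArg (fun M => M * σ g⁻¹) hkey'
    simpa [mul_assoc, hinv] using h3
end

section
/- Let S be a finite inverse semigroup, e ∈ E(S) an idempotent, and suppose the sandwich matrix of the 𝒥-class J_e is the identity (y_j x_i = δ_{ij} e with L_e = ⊔ x_i G_e, R_e = ⊔ G_e y_j). Set e_i = x_i y_i. Then each e_i is idempotent, and for any unitary matrix representation σ of the maximal subgroup G_e, the induced Schützenberger representation π = Ind_{G_e}(σ) satisfies π(s*) = π(s)* and π(s)π(s)*π(s) = π(s) for all s ∈ S; in particular π is a semiunitary ∗-representation. -/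
open Matrix

section aux
variable {S : Type*} [Semigroup S] (st : S → S)
  (hst1 : ∀ s, st (st s) = s)
  (hinv : ∀ s, s * st s * s = s)
  (hinv2 : ∀ s, st s * s * st s = st s)
  (huniq : ∀ s t : S, s * t * s = s → t * s * t = t → t = st s)

include hst1 hinv hinv2 huniq

omit hst1 hinv hinv2 in
lemma aux_stIdem (a : S) (ha : a * a = a) : st a = a :=
  (huniq a a (by rw [ha, ha]) (by rw [ha, ha])).symm

lemma aux_prodIdem (a b : S) (ha : a * a = a) (hb : b * b = b) :
    (a * b) * (a * b) = a * b := by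
  set u := st (a * b) with hu
  have hac : ∀ t : S, a * (a * t) = a * t := fun t => by rw [← mul_assoc, ha]
  have hbc : ∀ t : S, b * (b * t) = b * t := fun t => by rw [← mul_assoc, hb]
  have h1 : (a*b) * (b*u*a) * (a*b) = a*b := by
    have h := hinv (a*b)
    simp only [mul_assoc] at h ⊢
    rw [hbc, hac]
    exact h
  have h2 : (b*u*a) * (a*b) * (b*u*a) = b*u*a := by
    have h := hinv2 (a*b)
    have h' : ∀ t : S, u * (a * (b * (u * t))) = u * t := by
      intro t
      have := congrArg (· * t) h
      simp only [mul_assoc] at this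
      exact this
    simp only [mul_assoc]
    rw [hac, hbc, h']
  have hbua : b * u * a = u := huniq (a*b) (b*u*a) h1 h2
  have huu : u * u = u := by
    have h := hinv2 (a*b)
    calc u * u = (b*u*a) * (b*u*a) := by rw [hbua]
    _ = b * (u * (a*b) * u) * a := by simp only [mul_assoc]
    _ = b * u * a := by rw [h]
    _ = u := hbua
  have hsu : st u = u := aux_stIdem st huniq u huu
  have hab : a * b = u := by rw [← hst1 (a*b), ← hu, hsu]
  rw [hab, huu]

lemma aux_commIdem (a b : S) (ha : a * a = a) (hb : b * b = b) :
    a * b = b * a := by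
  have hab : (a*b)*(a*b) = a*b := aux_prodIdem st hst1 hinv hinv2 huniq a b ha hb
  have hba : (b*a)*(b*a) = b*a := aux_prodIdem st hst1 hinv hinv2 huniq b a hb ha
  have h1 : (a*b) * (b*a) * (a*b) = a*b := by
    calc (a*b) * (b*a) * (a*b) = a * ((b*b) * ((a*a) * b)) := by simp only [mul_assoc]
    _ = a * (b * (a * b)) := by rw [hb, ha]
    _ = (a*b)*(a*b) := by simp only [mul_assoc]
    _ = a*b := hab
  have h2 : (b*a) * (a*b) * (b*a) = b*a := by
    calc (b*a) * (a*b) * (b*a) = b * ((a*a) * ((b*b) * a)) := by simp only [mul_assoc]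
    _ = b * (a * (b * a)) := by rw [ha, hb]
    _ = (b*a)*(b*a) := by simp only [mul_assoc]
    _ = b*a := hba
  have := huniq (a*b) (b*a) h1 h2
  rw [this, aux_stIdem st huniq (a*b) hab]

end aux


/-- The (left) Schützenberger representation attached to coefficient data
`c : S → Fin m → Fin m → Option S` (where `c s j i = some g` records
`s x_i = x_j ∘ g` with `g ∈ G_e`, and `none` records a zero entry) and a matrix
representation `σ` of the maximal subgroup: the block matrix with `(j,i)` block
`σ g` when `c s j i = some g` and `0` otherwise. -/
def schutzRep {S : Type*} (k m : ℕ) (σ : S → Matrix (Fin k) (Fin k) ℂ)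
    (c : S → Fin m → Fin m → Option S) (s : S) :
    Matrix (Fin m × Fin k) (Fin m × Fin k) ℂ :=
  Matrix.of fun p q => (c s p.1 q.1).elim 0 fun g => σ g p.2 q.2

/-- Let `S` be a finite inverse semigroup (inverse map `∗`), `e` an idempotent
whose 𝒥-class has identity sandwich matrix: `L_e = ⊔ xᵢ G_e`, `R_e = ⊔ G_e yⱼ`
with `yⱼ xᵢ = δᵢⱼ e` (here `g ∈ G_e` is encoded by `g g∗ = e ∧ g∗ g = e`).
Set `eᵢ = xᵢ yᵢ`. Then each `eᵢ` is idempotent, and for any unitary matrix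
representation `σ` of `G_e` the Schützenberger representation
`π = Ind_{G_e}(σ)` satisfies `π(s∗) = π(s)ᴴ` and `π(s) π(s)ᴴ π(s) = π(s)` for
all `s ∈ S`; in particular `π` is a semiunitary `∗`-representation. -/
theorem schutzenberger_semiunitary_starRep
    (S : Type*) [Semigroup S] [Fintype S] (st : S → S)
    (hst1 : ∀ s, st (st s) = s)
    (hst2 : ∀ s t, st (s * t) = st t * st s)
    (hinv : ∀ s, s * st s * s = s)
    (hinv2 : ∀ s, st s * s * st s = st s)
    (huniq : ∀ s t : S, s * t * s = s → t * s * t = t → t = st s)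
    (e : S) (he : e * e = e)
    (m k : ℕ) (x y : Fin m → S)
    (hxe : ∀ i, x i * e = x i)
    (hey : ∀ i, e * y i = y i)
    (hxL : ∀ i, st (x i) * x i = e)
    (hyR : ∀ j, y j * st (y j) = e)
    (hdiag : ∀ i, y i * x i = e)
    (hoff : ∀ i j, i ≠ j →
      ¬ ((y j * x i) * st (y j * x i) = e ∧ st (y j * x i) * (y j * x i) = e))
    (hLcover : ∀ s : S, st s * s = e →
      ∃ (i : Fin m) (g : S), g * st g = e ∧ st g * g = e ∧ s = x i * g)
    (σ : S → Matrix (Fin k) (Fin k) ℂ)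
    (hσe : σ e = 1)
    (hσmul : ∀ g h : S, g * st g = e → st g * g = e → h * st h = e → st h * h = e →
      σ (g * h) = σ g * σ h)
    (hσuni : ∀ g : S, g * st g = e → st g * g = e →
      σ g ∈ Matrix.unitaryGroup (Fin k) ℂ)
    (c : S → Fin m → Fin m → Option S)
    (hc1 : ∀ (s : S) (i j : Fin m) (g : S), c s j i = some g →
      g * st g = e ∧ st g * g = e ∧ s * x i = x j * g)
    (hc2 : ∀ (s : S) (i j : Fin m), c s j i = none →
      ∀ g : S, g * st g = e → st g * g = e → s * x i ≠ x j * g) :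
    (∀ i, (x i * y i) * (x i * y i) = x i * y i) ∧
      (∀ s : S, schutzRep k m σ c (st s) = (schutzRep k m σ c s)ᴴ) ∧
      (∀ s : S, schutzRep k m σ c s * (schutzRep k m σ c s)ᴴ * schutzRep k m σ c s
        = schutzRep k m σ c s) := by
  classical
  have hstx : ∀ i, st (x i) = y i := fun i =>
    (huniq (x i) (y i) (by rw [mul_assoc, hdiag, hxe]) (by rw [hdiag, hey])).symm
  have hsty : ∀ i, st (y i) = x i := fun i => by rw [← hstx i, hst1]
  have heg : ∀ g : S, g * st g = e → e * g = g := fun g h => by rw [← h]; exact hinv g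
  have hge : ∀ g : S, st g * g = e → g * e = g := fun g h => by
    rw [← h, ← mul_assoc]; exact hinv g
  have part1 : ∀ i, (x i * y i) * (x i * y i) = x i * y i := fun i => by
    rw [mul_assoc, ← mul_assoc (y i), hdiag, hey]
  have hxinj : ∀ (i i' : Fin m) (g g' : S), g * st g = e → st g * g = e →
      g' * st g' = e → st g' * g' = e → x i * g = x i' * g' → i = i' ∧ g = g' := by
    intro i i' g g' hg1 hg2 hg1' hg2' h
    have key : ∀ (i : Fin m) (g : S), g * st g = e → (x i * g) * st (x i * g) = x i * y i := by
      intro i g hg1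
      rw [hst2, hstx, ← mul_assoc, mul_assoc (x i) g (st g), hg1, hxe]
    have hE : x i * y i = x i' * y i' := by rw [← key i g hg1, ← key i' g' hg1', h]
    by_cases hii : i = i'
    · subst hii
      refine ⟨rfl, ?_⟩
      calc g = e * g := (heg g hg1).symm
      _ = (y i * x i) * g := by rw [hdiag]
      _ = y i * (x i * g) := mul_assoc _ _ _
      _ = y i * (x i * g') := by rw [h]
      _ = (y i * x i) * g' := (mul_assoc _ _ _).symm
      _ = e * g' := by rw [hdiag]
      _ = g' := heg g' hg1'
    · exfalso
      apply hoff i i' hii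
      have hA : (y i' * x i) * (y i * x i') = e := by
        calc (y i' * x i) * (y i * x i') = y i' * ((x i * y i) * x i') := by
              simp only [mul_assoc]
        _ = y i' * ((x i' * y i') * x i') := by rw [hE]
        _ = (y i' * x i') * (y i' * x i') := by simp only [mul_assoc]
        _ = e := by rw [hdiag, he]
      have hB : (y i * x i') * (y i' * x i) = e := by
        calc (y i * x i') * (y i' * x i) = y i * ((x i' * y i') * x i) := by
              simp only [mul_assoc]
        _ = y i * ((x i * y i) * x i) := by rw [hE]
        _ = (y i * x i) * (y i * x i) := by simp only [mul_assoc]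
        _ = e := by rw [hdiag, he]
      constructor
      · rw [hst2, hstx, hsty]; exact hA
      · rw [hst2, hstx, hsty]; exact hB
  -- the star relation on coefficients
  have hstar_rel : ∀ (s : S) (i j : Fin m) (g : S), g * st g = e → st g * g = e →
      s * x i = x j * g → st s * x j = x i * st g := by
    intro s i j g hg1 hg2 h
    have hf : (st s * s) * (st s * s) = st s * s := by
      rw [← mul_assoc, hinv2]
    have h1 : (y i * st s) * (s * x i) = e := by
      have : st (s * x i) * (s * x i) = e := by
        rw [h, hst2, hstx]
        calc (st g * y j) * (x j * g) = st g * ((y j * x j) * g) := by simp only [mul_assoc]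
        _ = st g * (e * g) := by rw [hdiag]
        _ = st g * g := by rw [heg g hg1]
        _ = e := hg2
      rw [hst2, hstx] at this
      exact this
    have hfx : y i * ((st s * s) * x i) = e := by
      calc y i * ((st s * s) * x i) = (y i * st s) * (s * x i) := by simp only [mul_assoc]
      _ = e := h1
    have hcomm := aux_commIdem st hst1 hinv hinv2 huniq (x i * y i) (st s * s) (part1 i) hf
    have hfxi : (st s * s) * x i = x i := by
      have step : x i = (st s * s) * x i := by
        calc x i = x i * e := (hxe i).symm
        _ = x i * (y i * ((st s * s) * x i)) := by rw [hfx]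
        _ = ((x i * y i) * (st s * s)) * x i := by simp only [mul_assoc]
        _ = ((st s * s) * (x i * y i)) * x i := by rw [hcomm]
        _ = st s * (s * (x i * (y i * x i))) := by simp only [mul_assoc]
        _ = st s * (s * (x i * e)) := by rw [hdiag]
        _ = (st s * s) * x i := by rw [hxe, ← mul_assoc]
      exact step.symm
    calc st s * x j = st s * (((x j * g) * st g)) := by
          rw [mul_assoc (x j) g (st g), hg1, hxe]
    _ = st s * ((s * x i) * st g) := by rw [← h]
    _ = ((st s * s) * x i) * st g := by simp only [mul_assoc]
    _ = x i * st g := by rw [hfxi]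
  have hstar_c : ∀ (s : S) (i j : Fin m) (g : S), c s j i = some g →
      c (st s) i j = some (st g) := by
    intro s i j g hcs
    obtain ⟨hg1, hg2, hxx⟩ := hc1 s i j g hcs
    have hrel := hstar_rel s i j g hg1 hg2 hxx
    have hsg1 : st g * st (st g) = e := by rw [hst1]; exact hg2
    have hsg2 : st (st g) * st g = e := by rw [hst1]; exact hg1
    cases hcase : c (st s) i j with
    | none => exact absurd hrel (hc2 (st s) j i hcase (st g) hsg1 hsg2)
    | some g' =>
      obtain ⟨hg1', hg2', hxx'⟩ := hc1 (st s) j i g' hcase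
      have := hxinj i i g' (st g) hg1' hg2' hsg1 hsg2 (hxx'.symm.trans hrel)
      rw [this.2]
  have hnone : ∀ (s : S) (i j : Fin m), c s j i = none → c (st s) i j = none := by
    intro s i j hn
    cases hcase : c (st s) i j with
    | none => rfl
    | some h' =>
      have := hstar_c (st s) j i h' hcase
      rw [hst1, hn] at this
      cases this
  have hσstar : ∀ g : S, g * st g = e → st g * g = e → σ (st g) = (σ g)ᴴ := by
    intro g hg1 hg2
    have hsg1 : st g * st (st g) = e := by rw [hst1]; exact hg2
    have hsg2 : st (st g) * st g = e := by rw [hst1]; exact hg1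
    have h1 : σ g * σ (st g) = 1 := by
      rw [← hσmul g (st g) hg1 hg2 hsg1 hsg2, hg1, hσe]
    have h2 : (σ g)ᴴ * σ g = 1 := by
      have := Matrix.mem_unitaryGroup_iff'.mp (hσuni g hg1 hg2)
      rwa [Matrix.star_eq_conjTranspose] at this
    calc σ (st g) = 1 * σ (st g) := (one_mul _).symm
    _ = ((σ g)ᴴ * σ g) * σ (st g) := by rw [h2]
    _ = (σ g)ᴴ * (σ g * σ (st g)) := by rw [mul_assoc]
    _ = (σ g)ᴴ := by rw [h1, mul_one]
  have hent : ∀ (s : S) (p q : Fin m × Fin k),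
      schutzRep k m σ c s p q = (c s p.1 q.1).elim 0 fun g => σ g p.2 q.2 := by
    intro s p q; rfl
  have part2 : ∀ s : S, schutzRep k m σ c (st s) = (schutzRep k m σ c s)ᴴ := by
    intro s
    ext p q
    rw [Matrix.conjTranspose_apply, hent, hent]
    cases hc : c s q.1 p.1 with
    | none =>
      rw [hnone s p.1 q.1 hc]
      simp
    | some g =>
      rw [hstar_c s p.1 q.1 g hc]
      obtain ⟨hg1, hg2, _⟩ := hc1 s p.1 q.1 g hc
      simp only [Option.elim]
      rw [hσstar g hg1 hg2]
      rfl
  -- monomiality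
  have hcol : ∀ (s : S) (i j j' : Fin m) (g g' : S), c s j i = some g →
      c s j' i = some g' → j = j' ∧ g = g' := by
    intro s i j j' g g' h h'
    obtain ⟨hg1, hg2, hxx⟩ := hc1 s i j g h
    obtain ⟨hg1', hg2', hxx'⟩ := hc1 s i j' g' h'
    exact hxinj j j' g g' hg1 hg2 hg1' hg2' (hxx.symm.trans hxx')
  have hrow : ∀ (s : S) (i i' j : Fin m) (g g' : S), c s j i = some g →
      c s j i' = some g' → i = i' := by
    intro s i i' j g g' h h'
    have h1 := hstar_c s i j g h
    have h2 := hstar_c s i' j g' h'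
    exact (hcol (st s) j i i' (st g) (st g') h1 h2).1
  refine ⟨part1, part2, ?_⟩
  intro s
  set M := schutzRep k m σ c s with hM
  have hentM : ∀ (p q : Fin m × Fin k),
      M p q = (c s p.1 q.1).elim 0 fun g => σ g p.2 q.2 := fun p q => rfl
  set occ : Fin m → Prop := fun j => ∃ i g, c s j i = some g with hocc_def
  set D : Matrix (Fin m × Fin k) (Fin m × Fin k) ℂ :=
    Matrix.diagonal (fun p => if occ p.1 then (1:ℂ) else 0) with hD
  have hMMH : M * Mᴴ = D := by
    ext p r
    rw [Matrix.mul_apply]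
    simp only [Matrix.conjTranspose_apply]
    rw [Fintype.sum_prod_type]
    by_cases hocc : occ p.1
    · obtain ⟨a₀, g₀, ha₀⟩ := hocc
      rw [Finset.sum_eq_single a₀]
      · cases hcr : c s r.1 a₀ with
        | none =>
          have hpr : p ≠ r := by
            intro hh
            rw [← hh, ha₀] at hcr
            cases hcr
          rw [hD, Matrix.diagonal_apply_ne _ hpr]
          apply Finset.sum_eq_zero
          intro t _
          rw [hentM, hentM, hcr]
          simp
        | some g₁ =>
          obtain ⟨hj, hg⟩ := hcol s a₀ p.1 r.1 g₀ g₁ ha₀ hcr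
          obtain ⟨hg1, hg2, _⟩ := hc1 s a₀ p.1 g₀ ha₀
          have huni : σ g₀ * (σ g₀)ᴴ = 1 := by
            have := Matrix.mem_unitaryGroup_iff.mp (hσuni g₀ hg1 hg2)
            rwa [Matrix.star_eq_conjTranspose] at this
          have hstep : ∑ t, M p (a₀,t) * star (M r (a₀,t)) = (σ g₀ * (σ g₀)ᴴ) p.2 r.2 := by
            rw [Matrix.mul_apply]
            apply Finset.sum_congr rfl
            intro t _
            rw [hentM, hentM, ha₀, hcr, ← hg]
            simp [Matrix.conjTranspose_apply]
          rw [hstep, huni, Matrix.one_apply, hD, Matrix.diagonal_apply]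
          have hoccp : occ p.1 := ⟨a₀, g₀, ha₀⟩
          by_cases hk : p = r
          · rw [if_pos hk, if_pos hoccp, if_pos (congrArg Prod.snd hk)]
          · rw [if_neg hk]
            have : p.2 ≠ r.2 := by
              intro h2
              exact hk (Prod.ext hj h2)
            rw [if_neg this]
      · intro b _ hb
        apply Finset.sum_eq_zero
        intro t _
        cases hcb : c s p.1 b with
        | none => rw [hentM, hcb]; simp
        | some gb => exact absurd (hrow s b a₀ p.1 gb g₀ hcb ha₀) hb
      · intro h; exact absurd (Finset.mem_univ a₀) h
    · have hzero : ∀ a, c s p.1 a = none := by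
        intro a
        cases hca : c s p.1 a with
        | none => rfl
        | some g => exact absurd ⟨a, g, hca⟩ hocc
      have hs0 : ∀ a ∈ (Finset.univ : Finset (Fin m)),
          (∑ t, M p (a,t) * star (M r (a,t))) = 0 := by
        intro a _
        apply Finset.sum_eq_zero
        intro t _
        rw [hentM, hzero a]
        simp
      rw [Finset.sum_eq_zero hs0, hD, Matrix.diagonal_apply]
      by_cases hk : p = r
      · rw [if_pos hk, if_neg hocc]
      · rw [if_neg hk]
  have hDM : D * M = M := by
    ext p q
    rw [hD, Matrix.diagonal_mul]
    cases hcq : c s p.1 q.1 with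
    | none => rw [hentM, hcq]; simp
    | some g =>
      have hoccp : occ p.1 := ⟨q.1, g, hcq⟩
      rw [if_pos hoccp, one_mul]
  rw [hMMH, hDM]
end
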